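/- Suppose for the Bessel SDE dZ_t = ((d-1)/2)(1/Z_t) dt + dB_t with d ∈ (0,1) there exists a unique strong nonnegative solution ρ starting from 0 spending zero Lebesgue time at 0, realized as a measurable map φ : C(ℝ₊,ℝ) → C(ℝ₊,ℝ) with ρ_t = φ(B)_t solving Z_t = ((d-1)/2) k̃(t) + B_t, where k̃ is the principal value functional which is odd under Z ↦ -Z. Then ρ̃_t := -φ(-B)_t is also a solution of the same equation driven by B with ρ̃₀ = 0, and ρ̃ ≤ 0 while ρ ≥ 0; in particular, if ρ is not identically zero, then ρ and ρ̃ are two distinct solutions with the same initial condition and the same driving Brownian motion. -/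
import Mathlib


/-- Non-uniqueness for the Bessel SDE with principal-value drift, `d ∈ (0,1)`:
if `φ` realizes the unique strong nonnegative solution from `0` of
`Z_t = ((d-1)/2) k̃(Z)(t) + B_t` (with `k̃` the odd principal-value functional),
then `ρ̃ := -φ(-B)` is another, nonpositive, solution driven by the same `B`
with the same initial condition; if `ρ = φ(B)` is not identically zero the two
solutions are distinct. -/
theorem bessel_pv_nonuniqueness (d : ℝ) (hd : d ∈ Set.Ioo (0:ℝ) 1)
    (ktilde : (ℝ → ℝ) → (ℝ → ℝ))
    (hodd : ∀ Z : ℝ → ℝ, ktilde (fun t => -Z t) = fun t => -(ktilde Z t))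
    (φ : (ℝ → ℝ) → (ℝ → ℝ))
    (hφsol : ∀ w : ℝ → ℝ, w 0 = 0 →
      φ w 0 = 0 ∧ (∀ t ≥ (0:ℝ), 0 ≤ φ w t) ∧
      (∀ t ≥ (0:ℝ), φ w t = (d - 1) / 2 * ktilde (φ w) t + w t))
    (B : ℝ → ℝ) (hB0 : B 0 = 0) :
    let ρ : ℝ → ℝ := φ B
    let ρtilde : ℝ → ℝ := fun t => -φ (fun s => -B s) t
    ρtilde 0 = 0 ∧
    (∀ t ≥ (0:ℝ), ρtilde t = (d - 1) / 2 * ktilde ρtilde t + B t) ∧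
    (∀ t ≥ (0:ℝ), ρtilde t ≤ 0) ∧
    (∀ t ≥ (0:ℝ), 0 ≤ ρ t) ∧
    ((∃ t ≥ (0:ℝ), ρ t ≠ 0) → ρ ≠ ρtilde) := by
  intro ρ ρtilde
  obtain ⟨h0, hpos, hsol⟩ := hφsol (fun s => -B s) (by simp [hB0])
  obtain ⟨h0', hpos', hsol'⟩ := hφsol B hB0
  have hk : ktilde ρtilde = fun t => -(ktilde (φ fun s => -B s) t) :=
    hodd (φ fun s => -B s)
  refine ⟨by simp [ρtilde, h0], ?_, ?_, hpos', ?_⟩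
  · intro t ht
    have := hsol t ht
    simp only [ρtilde, hk]
    linarith
  · intro t ht
    simpa [ρtilde] using hpos t ht
  · rintro ⟨t, ht, hne⟩ heq
    have h1 : 0 ≤ ρ t := hpos' t ht
    have h2 : ρtilde t ≤ 0 := by simpa [ρtilde] using hpos t ht
    rw [heq] at hne h1
    exact hne (le_antisymm h2 h1)
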